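/- arXiv:1502.05813 — 2 statements merged into one kernel-verified Lean document; each statement's English description precedes it below -/
import Mathlib

section
/- Let n ≥ 5 and let λ be the Lie multiplication gₙ,₂ on ℂⁿ. Then Der(λ) has dimension n² − 3n + 4, there exists an abelian ideal of λ of dimension n − 1, and every abelian ideal of λ has dimension at most n − 1. -/
noncomputable section

abbrev V (n : ℕ) : Type := Fin n → ℂ

abbrev Bil (n : ℕ) : Type := V n →ₗ[ℂ] V n →ₗ[ℂ] V n

instance BilTop (n : ℕ) : TopologicalSpace (Bil n) :=
  TopologicalSpace.induced (fun μ : Bil n => fun x y : V n => μ x y) inferInstance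

/-- The change-of-basis action of a linear automorphism on multiplications. -/
def act {n : ℕ} (g : V n ≃ₗ[ℂ] V n) (μ : Bil n) : Bil n :=
  LinearMap.mk₂ ℂ (fun x y => g (μ (g.symm x) (g.symm y)))
    (fun x x' y => by simp)
    (fun c x y => by simp)
    (fun x y y' => by simp)
    (fun c x y => by simp)

/-- The orbit of a multiplication under the change-of-basis action. -/
def orb {n : ℕ} (μ : Bil n) : Set (Bil n) :=
  Set.range fun g : V n ≃ₗ[ℂ] V n => act g μ

/-- Two multiplications are isomorphic iff they lie in the same orbit. -/
def Isom {n : ℕ} (μ ν : Bil n) : Prop := ∃ g : V n ≃ₗ[ℂ] V n, act g μ = ν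

def levelOne {n : ℕ} (lam : Bil n) : Prop :=
  lam ≠ 0 ∧ closure (orb lam) ⊆ orb lam ∪ {0}

def levelTwo {n : ℕ} (lam : Bil n) : Prop :=
  (∀ μ ∈ closure (orb lam) \ orb lam, closure (orb μ) ⊆ orb μ ∪ {0}) ∧
  ∃ μ ∈ closure (orb lam) \ orb lam, μ ≠ 0

/-- `E n k` is the standard basis vector `e_{k+1}` of `ℂⁿ` (0-indexed `k`). -/
def E (n k : ℕ) : V n := fun m => if (m : ℕ) = k then 1 else 0

/-- The bilinear multiplication determined by a table of products of basis vectors. -/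
def ofTable {n : ℕ} (c : Fin n → Fin n → V n) : Bil n :=
  LinearMap.mk₂ ℂ (fun x y => ∑ i : Fin n, ∑ j : Fin n, (x i * y j) • c i j)
    (fun x x' y => by
      simp [add_mul, add_smul, Finset.sum_add_distrib])
    (fun a x y => by
      simp [Finset.smul_sum, smul_smul, mul_assoc])
    (fun x y y' => by
      simp [mul_add, add_smul, Finset.sum_add_distrib])
    (fun a x y => by
      simp [Finset.smul_sum, smul_smul, mul_assoc, mul_left_comm])

def JordanMul {n : ℕ} (lam : Bil n) : Prop :=
  (∀ x y : V n, lam x y = lam y x) ∧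
  ∀ x y : V n, lam (lam x x) (lam y x) = lam (lam (lam x x) y) x

def LieMul {n : ℕ} (lam : Bil n) : Prop :=
  (∀ x : V n, lam x x = 0) ∧
  ∀ x y z : V n, lam x (lam y z) + lam y (lam z x) + lam z (lam x y) = 0

def AssocMul {n : ℕ} (lam : Bil n) : Prop :=
  ∀ x y z : V n, lam (lam x y) z = lam x (lam y z)
/-- The space of derivations of a multiplication. -/
def Der {n : ℕ} (lam : Bil n) : Submodule ℂ (Module.End ℂ (V n)) where
  carrier := { D | ∀ x y : V n, D (lam x y) = lam (D x) y + lam x (D y) }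
  add_mem' := by
    intro a b ha hb x y
    simp only [LinearMap.add_apply, ha x y, hb x y, map_add, LinearMap.add_apply]
    abel
  zero_mem' := by intro x y; simp
  smul_mem' := by
    intro c a ha x y
    simp only [LinearMap.smul_apply, ha x y, map_smul, smul_add, LinearMap.smul_apply]

/-- `I` is an abelian ideal of the (Lie) multiplication `lam`. -/
def IsAbelianIdeal {n : ℕ} (lam : Bil n) (I : Submodule ℂ (V n)) : Prop :=
  (∀ x : V n, ∀ v ∈ I, lam x v ∈ I) ∧ ∀ v ∈ I, ∀ w ∈ I, lam v w = 0
/-- `n₅,₁ ⊕ 𝔞_{n-5}`: `[e₁,e₃] = e₅`, `[e₂,e₄] = e₅`. -/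
def n51 (n : ℕ) : Bil n :=
  ofTable fun i j =>
    if i.val = 0 ∧ j.val = 2 then E n 4
    else if i.val = 2 ∧ j.val = 0 then -E n 4
    else if i.val = 1 ∧ j.val = 3 then E n 4
    else if i.val = 3 ∧ j.val = 1 then -E n 4
    else 0

/-- `n₅,₂ ⊕ 𝔞_{n-5}`: `[e₁,e₂] = e₄`, `[e₁,e₃] = e₅`. -/
def n52 (n : ℕ) : Bil n :=
  ofTable fun i j =>
    if i.val = 0 ∧ j.val = 1 then E n 3
    else if i.val = 1 ∧ j.val = 0 then -E n 3
    else if i.val = 0 ∧ j.val = 2 then E n 4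
    else if i.val = 2 ∧ j.val = 0 then -E n 4
    else 0

/-- `r₂ ⊕ 𝔞_{n-2}`: `[e₁,e₂] = e₂`. -/
def r2 (n : ℕ) : Bil n :=
  ofTable fun i j =>
    if i.val = 0 ∧ j.val = 1 then E n 1
    else if i.val = 1 ∧ j.val = 0 then -E n 1
    else 0

/-- `g_{n,1}(α)`: `[e₁,e₂] = α e₂`, `[e₁,eᵢ] = eᵢ` for `3 ≤ i ≤ n`. -/
def g1 (n : ℕ) (α : ℂ) : Bil n :=
  ofTable fun i j =>
    if i.val = 0 ∧ j.val = 1 then α • E n 1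
    else if i.val = 1 ∧ j.val = 0 then -(α • E n 1)
    else if i.val = 0 ∧ 2 ≤ j.val then E n j.val
    else if j.val = 0 ∧ 2 ≤ i.val then -E n i.val
    else 0

/-- `g_{n,2}`: `[e₁,e₂] = e₂ + e₃`, `[e₁,eᵢ] = eᵢ` for `3 ≤ i ≤ n`. -/
def g2 (n : ℕ) : Bil n :=
  ofTable fun i j =>
    if i.val = 0 ∧ j.val = 1 then E n 1 + E n 2
    else if i.val = 1 ∧ j.val = 0 then -(E n 1 + E n 2)
    else if i.val = 0 ∧ 2 ≤ j.val then E n j.val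
    else if j.val = 0 ∧ 2 ≤ i.val then -E n i.val
    else 0


/-!
Coordinates are 0-indexed (`Pi.single k 1` is `e_{k+1}`), so that
`g2 x y = x₀ y - y₀ x + (x₀ y₁ - x₁ y₀) e₂`: the algebra is `ℂ e₀ ⋉ W` with `W = {y | y₀ = 0}`
abelian and `ad e₀` acting on `W` as `1 + N`, where `N y = y₁ e₂` has rank one.

A derivation `D` maps everything into `[𝔤, 𝔤] = W`, and on `W` it satisfies
`D ∘ ad e₀ - ad e₀ ∘ D = (D e₀)₀ • ad e₀`; on the Jordan block `span(e₁, e₂)` this forces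
`(D e₀)₀ = 0`, so `D` commutes with `N` on `W`, i.e. `D e₂ = c e₂` and `(D y)₁ = c y₁` on `W`.
In matrix entries these are `3n - 4` linear conditions, which become vanishing conditions once
`c = D₁₁` is subtracted from `D₂₂`; hence `dim Der = n² - 3n + 4`.
The ideal `W` is abelian of dimension `n - 1`, and `𝔤` itself is not abelian.
-/

open Module LinearMap

lemma ofTable_single {n : ℕ} (c : Fin n → Fin n → V n) (a b : Fin n) :
    ofTable c (Pi.single a 1) (Pi.single b 1) = c a b := by
  simp [ofTable, Pi.single_apply]

lemma apply_eq_sum_mul {n : ℕ} (D : Module.End ℂ (V n)) (x : V n) (i : Fin n) :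
    D x i = ∑ j, D (Pi.single j 1) i * x j := by
  rw [← LinearMap.toMatrix'_mulVec]
  rfl

theorem finrank_iInf_ker_proj {K ι : Type*} [Field K] [Fintype ι] (J : Set ι) :
    finrank K ↥(⨅ i ∈ J, ker (proj i : (ι → K) →ₗ[K] K)) = Nat.card ↥Jᶜ := by
  classical
  rw [(iInfKerProjEquiv K (fun _ => K) disjoint_compl_left
    (by rw [Set.compl_union_self])).finrank_eq, finrank_fintype_fun_eq_card,
    Nat.card_eq_fintype_card]

theorem finrank_ker_proj {K ι : Type*} [Field K] [Fintype ι] (i : ι) :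
    finrank K (ker (proj i : (ι → K) →ₗ[K] K)) = Fintype.card ι - 1 := by
  classical
  have hi : (proj i : (ι → K) →ₗ[K] K) ≠ 0 := fun h => by
    simpa using congr($h (Pi.single i 1))
  have := Module.Dual.finrank_ker_add_one_of_ne_zero hi
  rw [finrank_fintype_fun_eq_card] at this
  omega

theorem finrank_le_sub_one_of_abelian {n : ℕ} {lam : Bil n} (hlam : lam ≠ 0)
    (I : Submodule ℂ (V n)) (hI : ∀ v ∈ I, ∀ w ∈ I, lam v w = 0) :
    finrank ℂ I ≤ n - 1 := by
  have hI_ne_top : I ≠ ⊤ := by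
    rintro rfl
    exact hlam (LinearMap.ext₂ fun v w => hI v trivial w trivial)
  have := Submodule.finrank_lt hI_ne_top
  rw [finrank_fin_fun] at this
  omega

@[simp] lemma Nat.two_mod_add_three (n : ℕ) : 2 % (n + 3) = 2 := Nat.mod_eq_of_lt (by omega)

section g2

variable {n : ℕ}

lemma g2_apply (x y : V (n + 3)) :
    g2 (n + 3) x y = x 0 • y - y 0 • x + (x 0 * y 1 - x 1 * y 0) • Pi.single 2 1 := by
  let G : Bil (n + 3) := LinearMap.mk₂ ℂ
    (fun x y => x 0 • y - y 0 • x + (x 0 * y 1 - x 1 * y 0) • Pi.single 2 1)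
    (fun x x' y => by simp only [Pi.add_apply]; module)
    (fun c x y => by simp only [Pi.smul_apply, smul_eq_mul]; module)
    (fun x y y' => by simp only [Pi.add_apply]; module)
    (fun c x y => by simp only [Pi.smul_apply, smul_eq_mul]; module)
  suffices g2 (n + 3) = G from congr($this x y)
  refine LinearMap.ext_basis (Pi.basisFun ℂ _) (Pi.basisFun ℂ _) fun a b => ?_
  simp only [Pi.basisFun_apply, g2, ofTable_single, G, LinearMap.mk₂_apply]
  ext k
  rcases a with ⟨_ | _ | a, ha⟩ <;> rcases b with ⟨_ | _ | b, hb⟩ <;>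
    simp [E, Pi.single_apply, Fin.ext_iff, neg_add, -neg_add_rev]

lemma g2_apply_zero (x y : V (n + 3)) : g2 (n + 3) x y 0 = 0 := by
  simp [g2_apply, Fin.ext_iff, mul_comm]

lemma g2_apply_of_apply_zero (x y : V (n + 3)) (hy : y 0 = 0) :
    g2 (n + 3) x y = x 0 • (y + y 1 • Pi.single 2 1) := by
  rw [g2_apply, hy]
  module

lemma Der_g2_apply_zero {D : Module.End ℂ (V (n + 3))} (hD : D ∈ Der (g2 (n + 3)))
    {y : V (n + 3)} (hy : y 0 = 0) : D y 0 = 0 := by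
  have hz : (y - y 1 • Pi.single 2 1 : V (n + 3)) 0 = 0 := by simp [hy, Fin.ext_iff]
  have hy_eq : y = g2 (n + 3) (Pi.single 0 1) (y - y 1 • Pi.single 2 1) := by
    rw [g2_apply_of_apply_zero _ _ hz]
    simp [Fin.ext_iff]
  rw [hy_eq, hD, Pi.add_apply, g2_apply_zero, g2_apply_zero, add_zero]

lemma Der_g2_leibniz_single_zero {D : Module.End ℂ (V (n + 3))} (hD : D ∈ Der (g2 (n + 3)))
    {y : V (n + 3)} (hy : y 0 = 0) :
    y 1 • D (Pi.single 2 1) =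
      D (Pi.single 0 1) 0 • (y + y 1 • Pi.single 2 1) + D y 1 • Pi.single 2 1 := by
  have := hD (Pi.single 0 1) y
  rw [g2_apply_of_apply_zero _ _ hy, g2_apply_of_apply_zero _ _ hy,
    g2_apply_of_apply_zero _ _ (Der_g2_apply_zero hD hy)] at this
  simp only [Pi.single_eq_same, one_smul, map_add, map_smul] at this
  linear_combination this

theorem mem_Der_g2_iff (D : Module.End ℂ (V (n + 3))) :
    D ∈ Der (g2 (n + 3)) ↔
      (∀ j, D (Pi.single j 1) 0 = 0) ∧ (∀ j, 2 ≤ j → D (Pi.single j 1) 1 = 0) ∧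
        D (Pi.single 2 1) = D (Pi.single 1 1) 1 • Pi.single 2 1 := by
  constructor
  · intro hD
    have ha : D (Pi.single 0 1) 0 = 0 := by
      have h1 := congr_fun (Der_g2_leibniz_single_zero hD (y := Pi.single 1 1) (by simp)) 1
      have h2 := congr_fun
        (Der_g2_leibniz_single_zero hD (y := Pi.single 2 1) (by simp [Fin.ext_iff])) 2
      simp [Fin.ext_iff] at h1 h2
      linear_combination -(h1 + h2) / 2
    refine ⟨fun j => ?_, fun j hj => ?_, ?_⟩
    · rcases eq_or_ne j 0 with rfl | hj
      · exact ha
      · exact Der_g2_apply_zero hD (by simp [hj.symm])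
    · have hj0 : j ≠ 0 := by rintro rfl; simp [Fin.ext_iff] at hj
      have hj1 : j ≠ 1 := by rintro rfl; simp [Fin.le_def] at hj
      have := congr_fun (Der_g2_leibniz_single_zero hD (y := Pi.single j 1) (by simp [hj0.symm])) 2
      simpa [ha, hj1.symm] using this.symm
    · simpa [ha] using Der_g2_leibniz_single_zero hD (y := Pi.single 1 1) (by simp)
  · rintro ⟨h0, h1, h2⟩ x y
    have hx0 : ∀ x, D x 0 = 0 := fun x => by simp [apply_eq_sum_mul, h0]
    have hx1 : ∀ x, D x 1 = D (Pi.single 0 1) 1 * x 0 + D (Pi.single 1 1) 1 * x 1 := by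
      intro x
      rw [apply_eq_sum_mul, Fin.sum_univ_succ, Fin.sum_univ_succ,
        Finset.sum_eq_zero fun i _ => by rw [h1 _ (by simp [Fin.le_def]), zero_mul]]
      simp
    rw [g2_apply, g2_apply, g2_apply, map_add, map_sub, map_smul, map_smul, map_smul, h2,
      hx0 x, hx0 y, hx1 x, hx1 y]
    module

def g2DerCoords : Module.End ℂ (V (n + 3)) ≃ₗ[ℂ] (Fin (n + 3) × Fin (n + 3) → ℂ) :=
  (LinearMap.toMatrix'.trans (LinearEquiv.curry ℂ ℂ _ _).symm).trans
    (LinearEquiv.transvection (f := -proj (1, 1)) (v := Pi.single (2, 2) 1)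
      (by simp [Fin.ext_iff]))

lemma g2DerCoords_apply (D : Module.End ℂ (V (n + 3))) (i j : Fin (n + 3)) :
    g2DerCoords D (i, j) =
      D (Pi.single j 1) i - if (i, j) = (2, 2) then D (Pi.single 1 1) 1 else 0 := by
  rw [g2DerCoords, LinearEquiv.trans_apply, LinearEquiv.transvection.apply]
  simp only [LinearMap.neg_apply, coe_proj, Function.eval, neg_smul, Pi.add_apply, Pi.neg_apply,
    Pi.smul_apply, Pi.single_apply, Prod.mk.injEq, smul_eq_mul, mul_ite, mul_one, mul_zero,
    sub_eq_add_neg]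
  rfl

def g2DerZeros : Set (Fin (n + 3) × Fin (n + 3)) :=
  {p | p.1 = 0 ∨ (p.1 = 1 ∧ 2 ≤ p.2) ∨ p.2 = 2}

lemma card_compl_g2DerZeros : Nat.card ↥(g2DerZeros (n := n))ᶜ = n ^ 2 + 3 * n + 4 := by
  classical
  rw [Nat.card_eq_fintype_card, Fintype.card_subtype, Finset.card_filter, Fintype.sum_prod_type]
  simp only [g2DerZeros, Set.mem_compl_iff, Set.mem_ofPred_eq]
  simp only [Fin.sum_univ_succ (n := n + 2), Fin.sum_univ_succ (n := n + 1),
    Fin.sum_univ_succ (n := n)]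
  simp [Fin.ext_iff, Fin.le_def]
  ring

lemma Der_g2_eq_comap :
    Der (g2 (n + 3)) = (⨅ p ∈ g2DerZeros, ker (proj p)).comap g2DerCoords.toLinearMap := by
  ext D
  simp only [mem_Der_g2_iff, Submodule.mem_comap, Submodule.mem_iInf, mem_ker, proj_apply,
    LinearEquiv.coe_coe]
  constructor
  · rintro ⟨h0, h1, h2⟩ ⟨i, j⟩ hp
    rw [g2DerCoords_apply]
    rcases hp with rfl | ⟨rfl, hj⟩ | rfl
    · simp [h0, Fin.ext_iff]
    · simp [h1 j hj, Fin.ext_iff]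
    · rcases eq_or_ne i 2 with rfl | hi
      · simp [h2]
      · simp [h2, hi]
  · intro h
    refine ⟨fun j => ?_, fun j hj => ?_, ?_⟩
    · simpa [g2DerCoords_apply, Fin.ext_iff] using h (0, j) (Or.inl rfl)
    · simpa [g2DerCoords_apply, Fin.ext_iff] using h (1, j) (Or.inr (Or.inl ⟨rfl, hj⟩))
    · ext i
      have := h (i, 2) (Or.inr (Or.inr rfl))
      rcases eq_or_ne i 2 with rfl | hi
      · simpa [g2DerCoords_apply, sub_eq_zero] using this
      · simpa [g2DerCoords_apply, hi, Pi.single_apply] using this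

theorem finrank_Der_g2 : finrank ℂ (Der (g2 (n + 3))) = (n + 3) ^ 2 - 3 * (n + 3) + 4 := by
  rw [Der_g2_eq_comap, Submodule.comap_equiv_eq_map_symm, LinearEquiv.finrank_map_eq,
    finrank_iInf_ker_proj, card_compl_g2DerZeros]
  have : (n + 3) ^ 2 = n ^ 2 + 6 * n + 9 := by ring
  omega

lemma g2_ne_zero : g2 (n + 3) ≠ 0 := fun h => by
  simpa [g2_apply, Pi.single_apply, Fin.ext_iff] using congr($h (Pi.single 0 1) (Pi.single 1 1) 1)

lemma isAbelianIdeal_g2_ker_proj_zero : IsAbelianIdeal (g2 (n + 3)) (ker (proj 0)) :=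
  ⟨fun x v _ => g2_apply_zero x v,
    fun v hv w hw => by rw [g2_apply_of_apply_zero v w hw, show v 0 = 0 from hv, zero_smul]⟩

end g2

/-- derivations and maximal abelian ideal of g2. -/
theorem der_ab_g2 (n : ℕ) (hn : 5 ≤ n)  :
    Module.finrank ℂ (Der (g2 n)) = n ^ 2 - 3 * n + 4 ∧
    (∃ I : Submodule ℂ (V n), IsAbelianIdeal (g2 n) I ∧ Module.finrank ℂ I = n - 1) ∧
    (∀ I : Submodule ℂ (V n), IsAbelianIdeal (g2 n) I → Module.finrank ℂ I ≤ n - 1) := by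
  obtain ⟨m, rfl⟩ : ∃ m, n = m + 3 := ⟨n - 3, by omega⟩
  refine ⟨finrank_Der_g2, ⟨ker (proj 0), isAbelianIdeal_g2_ker_proj_zero, ?_⟩,
    fun I hI => finrank_le_sub_one_of_abelian g2_ne_zero I hI.2⟩
  rw [finrank_ker_proj, Fintype.card_fin]
end
end

section
/- Let n ≥ 3 and consider the multiplications J₁, J₂, J₃ on ℂⁿ. Then none of them is a degeneration of another: for any two distinct members μ, ν of {J₁, J₂, J₃}, ν does not lie in closure(Orb(μ)). -/
noncomputable section

/-- `J₁`: `e₁·e₁ = e₁`. -/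
def J1 (n : ℕ) : Bil n :=
  ofTable fun i j => if i.val = 0 ∧ j.val = 0 then E n 0 else 0

/-- `J₂`: `e₁·e₁ = e₁`, `e₁·eᵢ = eᵢ·e₁ = eᵢ` for `2 ≤ i ≤ n`. -/
def J2 (n : ℕ) : Bil n :=
  ofTable fun i j =>
    if i.val = 0 then E n j.val else if j.val = 0 then E n i.val else 0

/-- `J₃`: `e₁·e₂ = e₂·e₁ = e₃`. -/
def J3 (n : ℕ) : Bil n :=
  ofTable fun i j =>
    if (i.val = 0 ∧ j.val = 1) ∨ (i.val = 1 ∧ j.val = 0) then E n 2 else 0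
variable {n : ℕ}

/-- standard basis vector -/
def sb (k : Fin n) : V n := Pi.single k 1

lemma act_apply (g : V n ≃ₗ[ℂ] V n) (μ : Bil n) (x y : V n) :
    act g μ x y = g (μ (g.symm x) (g.symm y)) := rfl

lemma ofTable_apply (c : Fin n → Fin n → V n) (x y : V n) :
    ofTable c x y = ∑ i : Fin n, ∑ j : Fin n, (x i * y j) • c i j := rfl

lemma univ_sum_single_test (y : V n) : ∑ j : Fin n, (y j) • sb j = y := by
  simp only [sb, ← Pi.single_smul, smul_eq_mul, mul_one]
  exact Finset.univ_sum_single y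

lemma E_eq_single (k : Fin n) : E n k.val = sb k := by
  funext m
  simp [E, sb, Pi.single_apply, Fin.ext_iff, eq_comm]

lemma sb_apply (k m : Fin n) : sb k m = if m = k then 1 else 0 := by
  simp [sb, Pi.single_apply]
lemma ofTable_point (a b : Fin n) (v : V n) (x y : V n) :
    ∑ i : Fin n, ∑ j : Fin n,
      (x i * y j) • (if i = a ∧ j = b then v else 0) = (x a * y b) • v := by
  rw [Finset.sum_eq_single a]
  · rw [Finset.sum_eq_single b] <;> simp +contextual
  · intro c _ hc; simp [hc]
  · simp

lemma ofTable_congr {c c' : Fin n → Fin n → V n} (h : ∀ i j, c i j = c' i j)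
    (x y : V n) : ofTable c x y = ofTable c' x y := by
  show (∑ i : Fin n, ∑ j : Fin n, (x i * y j) • c i j) = _
  exact Finset.sum_congr rfl fun i _ => Finset.sum_congr rfl fun j _ => by rw [h]

lemma J1_apply (a : Fin n) (ha : (a:ℕ) = 0) (x y : V n) :
    J1 n x y = (x a * y a) • sb a := by
  show ofTable _ x y = _
  refine (ofTable_congr (c' := fun i j => if i = a ∧ j = a then sb a else 0)
    (fun i j => ?_) x y).trans (ofTable_point a a (sb a) x y)
  have h1 : ((i:ℕ) = 0 ∧ (j:ℕ) = 0) ↔ (i = a ∧ j = a) := by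
    rw [Fin.ext_iff, Fin.ext_iff]; omega
  simp only [h1]
  rw [← ha, E_eq_single]
lemma J3_apply (a b c : Fin n) (ha : (a:ℕ)=0) (hb : (b:ℕ)=1) (hc : (c:ℕ)=2) (x y : V n) :
    J3 n x y = (x a * y b + x b * y a) • sb c := by
  have hab : a ≠ b := fun q => by rw [q] at ha; omega
  show ofTable _ x y = _
  refine (ofTable_congr (c' := fun i j =>
      (if i = a ∧ j = b then sb c else 0) + (if i = b ∧ j = a then sb c else 0))
      (fun i j => ?_) x y).trans ?_
  · have h1 : ((i:ℕ)=0 ∧ (j:ℕ)=1) ↔ (i = a ∧ j = b) := by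
      rw [Fin.ext_iff, Fin.ext_iff]; omega
    have h2 : ((i:ℕ)=1 ∧ (j:ℕ)=0) ↔ (i = b ∧ j = a) := by
      rw [Fin.ext_iff, Fin.ext_iff]; omega
    simp only [h1, h2]
    rw [← hc, E_eq_single]
    by_cases p : i = a ∧ j = b
    · simp [p.1, p.2, hab, Ne.symm hab]
    · simp [p]
  · rw [ofTable_apply]
    simp only [smul_add, Finset.sum_add_distrib]
    rw [ofTable_point, ofTable_point, ← add_smul]

lemma J2_apply (a : Fin n) (ha : (a:ℕ)=0) (x y : V n) :
    J2 n x y = x a • y + (y a • x - (x a * y a) • sb a) := by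
  show ofTable _ x y = _
  refine (ofTable_congr (c' := fun i j =>
      if i = a then sb j else if j = a then sb i else 0) (fun i j => ?_) x y).trans ?_
  · have h1 : ((i:ℕ)=0) ↔ (i = a) := by rw [Fin.ext_iff]; omega
    have h2 : ((j:ℕ)=0) ↔ (j = a) := by rw [Fin.ext_iff]; omega
    simp only [h1, h2, E_eq_single]
  · rw [ofTable_apply]
    rw [Finset.sum_eq_add_sum_sdiff_singleton_of_mem (Finset.mem_univ a)]
    have e1 : (∑ j : Fin n, (x a * y j) •
        (if a = a then sb j else if j = a then sb a else 0)) = x a • y := by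
      simp only [if_pos rfl, if_true, mul_smul, ← Finset.smul_sum, univ_sum_single_test]
    have e2 : (∑ i ∈ Finset.univ \ {a}, ∑ j : Fin n, (x i * y j) •
        (if i = a then sb j else if j = a then sb i else 0))
        = y a • x - (x a * y a) • sb a := by
      have inner : ∀ i : Fin n, i ≠ a → (∑ j : Fin n, (x i * y j) •
          (if i = a then sb j else if j = a then sb i else 0)) = (x i * y a) • sb i := by
        intro i hi
        simp only [if_neg hi]
        rw [show (fun j => (x i * y j) • if j = a then sb i else (0:V n))
            = fun j => if j = a then (x i * y j) • sb i else 0 from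
          funext fun j => by split <;> simp]
        rw [Finset.sum_ite_eq' Finset.univ a fun j => (x i * y j) • sb i]
        simp
      rw [Finset.sum_congr rfl fun i hi => inner i (by
        simpa using (Finset.mem_sdiff.mp hi).2)]
      rw [Finset.sum_sdiff_eq_sub (Finset.subset_univ {a}), Finset.sum_singleton]
      congr 1
      simp only [mul_comm (x _) (y a), mul_smul, ← Finset.smul_sum, univ_sum_single_test]
    rw [e1, e2]
/-- trace of left multiplication, written as an explicitly continuous formula -/
def Tt (l : Bil n) (x : V n) : ℂ := ∑ i : Fin n, l x (sb i) i

lemma cont_eval (x y : V n) (i : Fin n) : Continuous fun l : Bil n => l x y i := by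
  have h : Continuous fun l : Bil n => (fun a b : V n => l a b) := continuous_induced_dom
  exact (continuous_apply i).comp (((continuous_apply y).comp ((continuous_apply x).comp h)))

lemma cont_T (x : V n) : Continuous fun l : Bil n => Tt l x :=
  continuous_finset_sum _ fun i _ => cont_eval x (sb i) i

lemma l_first (l : Bil n) (v z : V n) : l v z = ∑ a : Fin n, v a • l (sb a) z := by
  conv_lhs => rw [(univ_sum_single_test v).symm]
  simp [map_sum, LinearMap.sum_apply, LinearMap.map_smul, LinearMap.smul_apply]

lemma l_second (l : Bil n) (z v : V n) : l z v = ∑ a : Fin n, v a • l z (sb a) := by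
  conv_lhs => rw [(univ_sum_single_test v).symm]
  simp [map_sum, LinearMap.map_smul]

lemma orb_subset {μ : Bil n} {S : Set (Bil n)} (h : ∀ g, act g μ ∈ S) : orb μ ⊆ S := by
  rintro - ⟨g, rfl⟩; exact h g

lemma degeneration_excluded {μ ν : Bil n} {S : Set (Bil n)} (hc : IsClosed S)
    (h : ∀ g : V n ≃ₗ[ℂ] V n, act g μ ∈ S) (hν : ν ∉ S) : ν ∉ closure (orb μ) :=
  fun hm => hν (closure_minimal (orb_subset h) hc hm)

/-- Invariant separating `J1` from the others. -/
def S1 (n : ℕ) : Set (Bil n) :=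
  {l | ∀ x y x' y' : V n, ∀ i j : Fin n, l x y i * l x' y' j = l x' y i * l x y' j}

lemma S1_closed : IsClosed (S1 n) := by
  have : S1 n = ⋂ (x : V n), ⋂ (y : V n), ⋂ (x' : V n), ⋂ (y' : V n), ⋂ (i : Fin n), ⋂ (j : Fin n),
      {l : Bil n | l x y i * l x' y' j = l x' y i * l x y' j} := by
    ext l; simp only [S1, Set.mem_iInter, Set.mem_setOf_eq]
  rw [this]
  exact isClosed_iInter fun x => isClosed_iInter fun y => isClosed_iInter fun x' =>
    isClosed_iInter fun y' => isClosed_iInter fun i => isClosed_iInter fun j =>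
    isClosed_eq ((cont_eval x y i).mul (cont_eval x' y' j))
      ((cont_eval x' y i).mul (cont_eval x y' j))

lemma shape1 {l : Bil n} (f : V n → ℂ) (v : V n)
    (h : ∀ x y, l x y = (f x * f y) • v) : l ∈ S1 n := by
  intro x y x' y' i j
  simp only [h, Pi.smul_apply, smul_eq_mul]
  ring

lemma orbJ1_subset_S1 (hn : 0 < n) (g : V n ≃ₗ[ℂ] V n) : act g (J1 n) ∈ S1 n := by
  refine shape1 (fun x => (g.symm x) ⟨0,hn⟩) (g (sb ⟨0,hn⟩)) fun x y => ?_
  rw [act_apply, J1_apply ⟨0,hn⟩ rfl, map_smul]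
lemma nest_first (l : Bil n) (x y z : V n) (i : Fin n) :
    l (l x y) z i = ∑ a : Fin n, l x y a * l (sb a) z i := by
  rw [l_first l (l x y) z]
  simp [Finset.sum_apply]

lemma nest_second (l : Bil n) (x y z : V n) (i : Fin n) :
    l z (l x y) i = ∑ a : Fin n, l x y a * l z (sb a) i := by
  rw [l_second l z (l x y)]
  simp [Finset.sum_apply]

/-- Invariant separating `J3` from the others: two-step nilpotency. -/
def S3 (n : ℕ) : Set (Bil n) :=
  {l | ∀ x y z : V n, ∀ i : Fin n,
    (∑ a : Fin n, l x y a * l (sb a) z i) = 0 ∧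
    (∑ a : Fin n, l x y a * l z (sb a) i) = 0}

lemma S3_closed : IsClosed (S3 n) := by
  have : S3 n = ⋂ (x : V n), ⋂ (y : V n), ⋂ (z : V n), ⋂ (i : Fin n),
      ({l : Bil n | (∑ a : Fin n, l x y a * l (sb a) z i) = 0} ∩
       {l : Bil n | (∑ a : Fin n, l x y a * l z (sb a) i) = 0}) := by
    ext l
    simp only [S3, Set.mem_iInter, Set.mem_setOf_eq, Set.mem_inter_iff]
  rw [this]
  refine isClosed_iInter fun x => isClosed_iInter fun y => isClosed_iInter fun z =>
    isClosed_iInter fun i => IsClosed.inter ?_ ?_ <;>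
  exact isClosed_eq (continuous_finset_sum _ fun a _ =>
    (cont_eval x y a).mul (cont_eval _ _ i)) continuous_const

lemma shape3 {l : Bil n} (v : V n) (hv1 : ∀ z, l v z = 0) (hv2 : ∀ z, l z v = 0)
    (h : ∀ x y, ∃ c : ℂ, l x y = c • v) : l ∈ S3 n := by
  intro x y z i
  obtain ⟨c, hc⟩ := h x y
  constructor
  · rw [← nest_first, hc, map_smul, LinearMap.smul_apply, hv1]
    simp
  · rw [← nest_second, hc, map_smul, hv2]
    simp

lemma orbJ3_subset_S3 (hn : 3 ≤ n) (g : V n ≃ₗ[ℂ] V n) : act g (J3 n) ∈ S3 n := by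
  set a0 : Fin n := ⟨0, by omega⟩
  set a1 : Fin n := ⟨1, by omega⟩
  set a2 : Fin n := ⟨2, by omega⟩
  have happ : ∀ x y, act g (J3 n) x y =
      (g.symm x a0 * g.symm y a1 + g.symm x a1 * g.symm y a0) • g (sb a2) := by
    intro x y
    rw [act_apply, J3_apply a0 a1 a2 rfl rfl rfl, map_smul]
  have h20 : sb (n := n) a2 a0 = 0 := by simp [sb_apply, a0, a2, Fin.mk.injEq]
  have h21 : sb (n := n) a2 a1 = 0 := by simp [sb_apply, a1, a2, Fin.mk.injEq]
  refine shape3 (g (sb a2)) (fun z => ?_) (fun z => ?_) (fun x y => ⟨_, happ x y⟩) <;>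
    rw [happ] <;> simp [LinearEquiv.symm_apply_apply, h20, h21]
/-- Invariant separating `J2` from the others. -/
def S2 (n : ℕ) : Set (Bil n) :=
  {l | ∀ x y z w : V n, ∀ i j : Fin n,
    (n:ℂ)^2 * (l x y i * l z w j - l z y i * l x w j)
    = Tt l y * Tt l w * (z i * x j - x i * z j)
    + (n:ℂ) * (Tt l y * (x i * l z w j - z i * l x w j)
             + Tt l w * (l x y i * z j - l z y i * x j))}

lemma S2_closed : IsClosed (S2 n) := by
  have : S2 n = ⋂ (x : V n), ⋂ (y : V n), ⋂ (z : V n), ⋂ (w : V n), ⋂ (i : Fin n), ⋂ (j : Fin n),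
      {l : Bil n |
        (n:ℂ)^2 * (l x y i * l z w j - l z y i * l x w j)
        = Tt l y * Tt l w * (z i * x j - x i * z j)
        + (n:ℂ) * (Tt l y * (x i * l z w j - z i * l x w j)
                 + Tt l w * (l x y i * z j - l z y i * x j))} := by
    ext l
    simp only [S2, Set.mem_iInter, Set.mem_setOf_eq]
  rw [this]
  refine isClosed_iInter fun x => isClosed_iInter fun y => isClosed_iInter fun z =>
    isClosed_iInter fun w => isClosed_iInter fun i => isClosed_iInter fun j =>
    isClosed_eq (continuous_const.mul (((cont_eval x y i).mul (cont_eval z w j)).sub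
      ((cont_eval z y i).mul (cont_eval x w j)))) (Continuous.add
        (((cont_T y).mul (cont_T w)).mul continuous_const)
        (continuous_const.mul (Continuous.add
          ((cont_T y).mul ((continuous_const.mul (cont_eval z w j)).sub
            (continuous_const.mul (cont_eval x w j))))
          ((cont_T w).mul (((cont_eval x y i).mul continuous_const).sub
            ((cont_eval z y i).mul continuous_const))))))

lemma f_expand (f : V n →ₗ[ℂ] ℂ) (x : V n) : f x = ∑ a : Fin n, x a * f (sb a) := by
  conv_lhs => rw [(univ_sum_single_test x).symm]
  simp [map_sum, map_smul, smul_eq_mul]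

lemma shapeT {l : Bil n} (f : V n →ₗ[ℂ] ℂ) (v : V n) (hfv : f v = 1)
    (h : ∀ x y, l x y = f x • y + (f y • x - (f x * f y) • v)) (x : V n) :
    Tt l x = n * f x := by
  have e : ∀ i : Fin n, l x (sb i) i
      = f x + (f (sb i) * x i - f x * (f (sb i) * v i)) := by
    intro i
    rw [h]
    simp [sb_apply, mul_assoc]
  rw [Tt, Finset.sum_congr rfl fun i _ => e i, Finset.sum_add_distrib,
    Finset.sum_sub_distrib, ← Finset.mul_sum,
    Finset.sum_congr rfl fun i _ => (mul_comm (f (sb i)) (x i)),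
    ← f_expand,
    Finset.sum_congr rfl fun i _ => (mul_comm (f (sb i)) (v i)),
    ← f_expand, hfv,
    Finset.sum_const, Finset.card_univ, Fintype.card_fin, nsmul_eq_mul]
  ring

lemma shape2 {l : Bil n} (f : V n →ₗ[ℂ] ℂ) (v : V n) (hfv : f v = 1)
    (h : ∀ x y, l x y = f x • y + (f y • x - (f x * f y) • v)) : l ∈ S2 n := by
  intro x y z w i j
  rw [shapeT f v hfv h, shapeT f v hfv h]
  simp only [h, Pi.add_apply, Pi.sub_apply, Pi.smul_apply, smul_eq_mul]
  ring

lemma orbJ2_subset_S2 (hn : 3 ≤ n) (g : V n ≃ₗ[ℂ] V n) : act g (J2 n) ∈ S2 n := by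
  set a0 : Fin n := ⟨0, by omega⟩
  refine shape2 ((LinearMap.proj a0).comp g.symm.toLinearMap) (g (sb a0)) ?_ fun x y => ?_
  · simp [sb_apply]
  · rw [act_apply, J2_apply a0 rfl, map_add, map_smul, map_sub, map_smul, map_smul]
    simp [LinearEquiv.apply_symm_apply]
lemma Tt_J1 (hn : 0 < n) (x : V n) : Tt (J1 n) x = x ⟨0, hn⟩ := by
  set a0 : Fin n := ⟨0, hn⟩
  rw [Tt, Finset.sum_eq_single a0]
  · rw [J1_apply a0 rfl]
    simp [sb_apply]
  · intro b _ hb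
    rw [J1_apply a0 rfl]
    simp [sb_apply, hb]
  · simp

lemma Tt_J3 (hn : 3 ≤ n) (x : V n) : Tt (J3 n) x = 0 := by
  set a0 : Fin n := ⟨0, by omega⟩
  set a1 : Fin n := ⟨1, by omega⟩
  set a2 : Fin n := ⟨2, by omega⟩
  rw [Tt, Finset.sum_eq_single a2]
  · rw [J3_apply a0 a1 a2 rfl rfl rfl]
    simp [sb_apply, a0, a1, a2, Fin.mk.injEq]
  · intro b _ hb
    rw [J3_apply a0 a1 a2 rfl rfl rfl]
    simp [sb_apply, hb]
  · simp

lemma J2_not_S1 (hn : 3 ≤ n) : J2 n ∉ S1 n := by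
  set a0 : Fin n := ⟨0, by omega⟩
  set a1 : Fin n := ⟨1, by omega⟩
  intro h
  have H := h (sb a0) (sb a0) (sb a1) (sb a1) a1 a1
  simp only [J2_apply a0 rfl] at H
  simp [sb_apply, a0, a1, Fin.mk.injEq] at H

lemma J3_not_S1 (hn : 3 ≤ n) : J3 n ∉ S1 n := by
  set a0 : Fin n := ⟨0, by omega⟩
  set a1 : Fin n := ⟨1, by omega⟩
  set a2 : Fin n := ⟨2, by omega⟩
  intro h
  have H := h (sb a0) (sb a1) (sb a1) (sb a0) a2 a2
  simp only [J3_apply a0 a1 a2 rfl rfl rfl] at H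
  simp [sb_apply, a0, a1, a2, Fin.mk.injEq] at H

lemma J1_not_S3 (hn : 3 ≤ n) : J1 n ∉ S3 n := by
  set a0 : Fin n := ⟨0, by omega⟩
  intro h
  have H := (h (sb a0) (sb a0) (sb a0) a0).1
  rw [← nest_first] at H
  simp only [J1_apply a0 rfl] at H
  simp [sb_apply] at H

lemma J2_not_S3 (hn : 3 ≤ n) : J2 n ∉ S3 n := by
  set a0 : Fin n := ⟨0, by omega⟩
  intro h
  have H := (h (sb a0) (sb a0) (sb a0) a0).1
  rw [← nest_first] at H
  simp only [J2_apply a0 rfl] at H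
  simp [sb_apply] at H

lemma J1_not_S2 (hn : 3 ≤ n) : J1 n ∉ S2 n := by
  set a0 : Fin n := ⟨0, by omega⟩
  set a1 : Fin n := ⟨1, by omega⟩
  set a2 : Fin n := ⟨2, by omega⟩
  intro h
  have H := h (sb a1) (sb a0) (sb a2) (sb a0) a2 a1
  rw [Tt_J1 (by omega)] at H
  simp only [J1_apply a0 rfl] at H
  simp [sb_apply, a0, a1, a2, Fin.mk.injEq] at H

lemma J3_not_S2 (hn : 3 ≤ n) : J3 n ∉ S2 n := by
  set a0 : Fin n := ⟨0, by omega⟩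
  set a1 : Fin n := ⟨1, by omega⟩
  set a2 : Fin n := ⟨2, by omega⟩
  intro h
  have H := h (sb a0) (sb a1) (sb a1) (sb a0) a2 a2
  rw [Tt_J3 hn] at H
  simp only [J3_apply a0 a1 a2 rfl rfl rfl] at H
  have hne : (n:ℂ) ≠ 0 := Nat.cast_ne_zero.mpr (by omega)
  simp [sb_apply, a0, a1, a2, Fin.mk.injEq, hne] at H
/-- none of `J₁`, `J₂`, `J₃` is a degeneration of another. -/
theorem J1_J2_J3_no_degenerations (n : ℕ) (hn : 3 ≤ n) :
    ∀ μ ∈ ({J1 n, J2 n, J3 n} : Set (Bil n)),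
      ∀ ν ∈ ({J1 n, J2 n, J3 n} : Set (Bil n)),
        μ ≠ ν → ν ∉ closure (orb μ) := by
  have h1 : ∀ ν : Bil n, ν ∉ S1 n → ν ∉ closure (orb (J1 n)) := fun ν hν =>
    degeneration_excluded S1_closed (orbJ1_subset_S1 (by omega)) hν
  have h2 : ∀ ν : Bil n, ν ∉ S2 n → ν ∉ closure (orb (J2 n)) := fun ν hν =>
    degeneration_excluded S2_closed (orbJ2_subset_S2 hn) hν
  have h3 : ∀ ν : Bil n, ν ∉ S3 n → ν ∉ closure (orb (J3 n)) := fun ν hν =>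
    degeneration_excluded S3_closed (orbJ3_subset_S3 hn) hν
  intro μ hμ ν hν hne
  simp only [Set.mem_insert_iff, Set.mem_singleton_iff] at hμ hν
  rcases hμ with rfl | rfl | rfl <;> rcases hν with rfl | rfl | rfl
  · exact absurd rfl hne
  · exact h1 _ (J2_not_S1 hn)
  · exact h1 _ (J3_not_S1 hn)
  · exact h2 _ (J1_not_S2 hn)
  · exact absurd rfl hne
  · exact h2 _ (J3_not_S2 hn)
  · exact h3 _ (J1_not_S3 hn)
  · exact h3 _ (J2_not_S3 hn)
  · exact absurd rfl hne
end
end
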